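/- arXiv:1705.07530 — 6 statements merged into one kernel-verified Lean document; each statement's English description precedes it below -/
import Mathlib

section
/- Suppose integers $c_1,\dots,c_n$ satisfy: $c_1(c_1+c_n)=0$, $c_i(c_i+2c_{i-1})=0$ for all $2\le i\le n$, and $c_ic_j=0$ for all pairs $(i,j)$ with $i-j\ge 2$ and $(i,j)\ne(n,1)$. Then $c_i=0$ for all $i$. -/
/-!
Read the relations `c i * (c i + 2 * c (i - 1)) = 0` as a chain: if some `c k` vanishes, then so
does every later `c m`, since `c (m + 1) ^ 2 = 0`. Hence either `c n = 0`, and then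
`c 1 * (c 1 + c n) = 0` forces `c 1 = 0`; or no `c i` vanishes, each relation gives
`c i = -2 * c (i - 1)`, so `c n = (-2) ^ (n - 1) * c 1`, and `c 1 ^ 2 * (1 + (-2) ^ (n - 1)) = 0`
again forces `c 1 = 0` because `(-2) ^ k ≠ -1`. In both cases `c 1 = 0` propagates to all `c i`.
-/

section Chain

variable {R : Type*} [Ring R] [NoZeroDivisors R] {c : ℕ → R} {n : ℕ}

theorem chain_eq_zero_of_le
    (hrec : ∀ i, 1 ≤ i → i < n → c (i + 1) * (c (i + 1) + 2 * c i) = 0)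
    {k : ℕ} (hk : 1 ≤ k) (hck : c k = 0) {m : ℕ} (hkm : k ≤ m) (hmn : m ≤ n) : c m = 0 := by
  induction m, hkm using Nat.le_induction with
  | base => exact hck
  | succ m hkm ih =>
    have hcm : c m = 0 := ih (by omega)
    have h := hrec m (by omega) hmn
    rw [hcm, mul_zero, add_zero] at h
    exact mul_self_eq_zero.mp h

theorem chain_eq_neg_two_pow_mul
    (hrec : ∀ i, 1 ≤ i → i < n → c (i + 1) * (c (i + 1) + 2 * c i) = 0) (hcn : c n ≠ 0) :
    ∀ k, k + 1 ≤ n → c (k + 1) = (-2) ^ k * c 1 := by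
  intro k
  induction k with
  | zero => simp
  | succ k ih =>
    intro hkn
    have hsucc : c (k + 2) ≠ 0 :=
      fun h ↦ hcn (chain_eq_zero_of_le hrec (by omega) h hkn le_rfl)
    have hsum := (mul_eq_zero.mp (hrec (k + 1) (by omega) hkn)).resolve_left hsucc
    rw [eq_neg_of_add_eq_zero_left hsum, ih (by omega), pow_succ', ← neg_mul, mul_assoc,
      neg_mul]

end Chain

theorem one_add_neg_two_pow_ne_zero (k : ℕ) : (1 : ℤ) + (-2) ^ k ≠ 0 := by
  rcases k.eq_zero_or_pos with rfl | hk
  · norm_num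
  · have h2 : (2 : ℤ) ≤ 2 ^ k := le_self_pow₀ (by norm_num) hk.ne'
    rcases neg_one_pow_eq_or ℤ k with h | h <;>
      rw [neg_pow, h] <;> linarith

theorem type3_quadratic_system_trivial_general (n : ℕ) (c : ℕ → ℤ)
    (h1 : c 1 * (c 1 + c n) = 0)
    (h2 : ∀ i, 2 ≤ i → i ≤ n → c i * (c i + 2 * c (i - 1)) = 0) :
    ∀ i, 1 ≤ i → i ≤ n → c i = 0 := by
  intro i hi hin
  have hrec : ∀ i, 1 ≤ i → i < n → c (i + 1) * (c (i + 1) + 2 * c i) = 0 :=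
    fun i hi hin ↦ h2 (i + 1) (by omega) hin
  suffices hc1 : c 1 = 0 from chain_eq_zero_of_le hrec le_rfl hc1 hi hin
  by_cases hcn : c n = 0
  · rw [hcn, add_zero] at h1
    exact mul_self_eq_zero.mp h1
  · obtain ⟨k, rfl⟩ : ∃ k, n = k + 1 := ⟨n - 1, by omega⟩
    rw [chain_eq_neg_two_pow_mul hrec hcn k le_rfl] at h1
    have h : c 1 * c 1 * (1 + (-2) ^ k) = 0 := by linear_combination h1
    exact mul_self_eq_zero.mp ((mul_eq_zero.mp h).resolve_right (one_add_neg_two_pow_ne_zero k))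

theorem type3_quadratic_system_trivial (n : ℕ) (hn : 3 ≤ n) (c : ℕ → ℤ)
    (h1 : c 1 * (c 1 + c n) = 0)
    (h2 : ∀ i, 2 ≤ i → i ≤ n → c i * (c i + 2 * c (i - 1)) = 0)
    (h3 : ∀ i j, i ≤ n → 1 ≤ j → j + 2 ≤ i → (i, j) ≠ (n, 1) → c i * c j = 0) :
    ∀ i, 1 ≤ i → i ≤ n → c i = 0 :=
  type3_quadratic_system_trivial_general n c h1 h2
end

section
/- Let $A$ be the $n\times n$ Type-2 matrix with entries $a_i=\pm 1$ ($\det A = 2$), let $J$ be the all-ones matrix, and define $R = A^{-1} + \frac{1}{2}J$. Then $R$ is an integer matrix. -/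
/-!
Write `cycMat n a = 1 - M`, where `M` is the cyclic shift weighted by the signs `-a i`.
The power `M ^ k` lives on the `k`-th cyclic off-diagonal, with entries that are products
of signs; in particular `M ^ n = (∏ i, -a i) • 1 = -1`, because an odd number of the `-a i`
equal `-1`. The geometric sum then gives `(1 - M) * ∑ k < n, M ^ k = 1 - M ^ n = 2`, so
`2 • (cycMat n a)⁻¹` has all entries `±1` and `(cycMat n a)⁻¹ + J / 2` has entries `0` or `1`.
-/

/-- `cycMat n a` is the `n × n` matrix with `1`'s on the diagonal, `a 0` in the
`(0, n-1)` entry (i.e. the `(1,n)` entry in 1-based indexing), `a i` in the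
`(i, i-1)` entry, and zeros elsewhere. -/
def cycMat (n : ℕ) {R : Type*} [CommRing R] (a : Fin n → R) : Matrix (Fin n) (Fin n) R :=
  Matrix.of fun i j =>
    if i = j then 1 else if (i : ℕ) = ((j : ℕ) + 1) % n then a i else 0

/-- The all-ones matrix. -/
def allOnes (n : ℕ) : Matrix (Fin n) (Fin n) ℚ := Matrix.of fun _ _ => 1

open Finset Matrix
open Fin.NatCast Fin.CommRing

lemma Finset.prod_eq_neg_one_pow_card_filter {ι M : Type*} [CommMonoid M] [HasDistribNeg M]
    (s : Finset ι) (b : ι → M) [DecidablePred fun i => b i = -1]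
    (hb : ∀ i ∈ s, b i = 1 ∨ b i = -1) :
    ∏ i ∈ s, b i = (-1) ^ #{i ∈ s | b i = -1} := by
  rw [card_filter, ← prod_pow_eq_pow_sum]
  refine prod_congr rfl fun i hi => ?_
  rcases hb i hi with h | h <;> by_cases h' : b i = -1 <;> simp_all

lemma Matrix.inv_one_sub_of_pow_eq_neg_one {ι K : Type*} [Fintype ι] [DecidableEq ι] [Field K]
    [NeZero (2 : K)] {M : Matrix ι ι K} {m : ℕ} (hM : M ^ m = -1) :
    (1 - M)⁻¹ = (2 : K)⁻¹ • ∑ k ∈ range m, M ^ k := by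
  apply inv_eq_right_inv
  rw [mul_smul_comm, mul_neg_geom_sum, hM, sub_neg_eq_add, ← two_smul K, smul_smul,
    inv_mul_cancel₀ two_ne_zero, one_smul]

section WeightedShift

variable {R : Type*} [CommRing R] {n : ℕ} [NeZero n]

lemma Fin.prod_range_add_natCast {M : Type*} [CommMonoid M] (f : Fin n → M) (j : Fin n) :
    ∏ t ∈ range n, f (j + t) = ∏ i, f i := by
  rw [← Fin.prod_univ_eq_prod_range (fun t => f (j + t))]
  simp only [Fin.cast_val_eq_self]
  exact Fintype.prod_equiv (Equiv.addLeft j) _ _ fun _ => rfl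

def weightedShift (a : Fin n → R) : Matrix (Fin n) (Fin n) R :=
  of fun i j => if i = j + 1 then a i else 0

lemma weightedShift_pow_apply (a : Fin n → R) (k : ℕ) (i j : Fin n) :
    (weightedShift a ^ k) i j = if i = j + k then ∏ t ∈ range k, a (j + t + 1) else 0 := by
  induction k generalizing j with
  | zero => simp [one_apply]
  | succ k ih =>
    rw [pow_succ, mul_apply, sum_eq_single (j + 1), ih, prod_range_succ']
    · have hshift : j + 1 + k = j + ↑(k + 1) := by push_cast; ring
      simp only [weightedShift, of_apply, if_pos, hshift]
      split_ifs
      · push_cast; ring_nf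
      · rw [zero_mul]
    · intro l _ hl
      simp [weightedShift, hl]
    · simp

lemma weightedShift_pow_self (a : Fin n → R) : weightedShift a ^ n = (∏ i, a i) • 1 := by
  ext i j
  rw [weightedShift_pow_apply, Fin.natCast_self, add_zero, Matrix.smul_apply, one_apply]
  simp only [add_right_comm j _ (1 : Fin n), Fin.prod_range_add_natCast a (j + 1)]
  split_ifs <;> simp

lemma sum_weightedShift_pow_apply (a : Fin n → R) (i j : Fin n) :
    (∑ k ∈ range n, weightedShift a ^ k) i j = ∏ t ∈ range (i - j : Fin n), a (j + t + 1) := by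
  rw [Matrix.sum_apply, sum_eq_single (i - j : Fin n).val]
  · simp [weightedShift_pow_apply]
  · intro k hk hne
    rw [weightedShift_pow_apply, if_neg]
    rintro rfl
    apply hne
    simp [Fin.val_natCast, Nat.mod_eq_of_lt (mem_range.mp hk)]
  · simp

lemma cycMat_eq_one_sub_weightedShift (hn : 2 ≤ n) (a : Fin n → R) :
    cycMat n a = 1 - weightedShift (-a) := by
  have hsucc : ∀ i j : Fin n, (i : ℕ) = ((j : ℕ) + 1) % n ↔ i = j + 1 := fun i j => by
    rw [Fin.ext_iff, Fin.val_add, Fin.val_one', Nat.mod_eq_of_lt (by omega : 1 < n)]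
  ext i j
  simp only [cycMat, weightedShift, of_apply, Matrix.sub_apply, one_apply, hsucc, Pi.neg_apply]
  split_ifs <;> simp_all

end WeightedShift

theorem R_is_integer_matrix (n : ℕ) (hn : 2 ≤ n) (a : Fin n → ℚ)
    (ha : ∀ i, a i = 1 ∨ a i = -1)
    (hodd : Odd (Finset.univ.filter (fun i => a i = 1)).card) :
    ∀ i j, ∃ m : ℤ, ((cycMat n a)⁻¹ + (1 / 2 : ℚ) • allOnes n) i j = (m : ℚ) := by
  have : NeZero n := ⟨by omega⟩
  have hsign : ∀ i, (-a) i = 1 ∨ (-a) i = -1 := fun i => by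
    rcases ha i with h | h <;> simp [h]
  have hcycle : weightedShift (-a) ^ n = -1 := by
    have hcard : #{i | (-a) i = -1} = #{i | a i = 1} := by simp
    rw [weightedShift_pow_self, prod_eq_neg_one_pow_card_filter _ _ fun i _ => hsign i, hcard,
      hodd.neg_one_pow, neg_one_smul]
  intro i j
  rw [cycMat_eq_one_sub_weightedShift hn, inv_one_sub_of_pow_eq_neg_one hcycle]
  have hentry : (∑ k ∈ range n, weightedShift (-a) ^ k) i j = 1 ∨
      (∑ k ∈ range n, weightedShift (-a) ^ k) i j = -1 := by
    rw [sum_weightedShift_pow_apply, prod_eq_neg_one_pow_card_filter _ _ fun t _ => hsign _]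
    exact neg_one_pow_eq_or ℚ _
  rcases hentry with h | h
  · exact ⟨1, by norm_num [allOnes, h]⟩
  · exact ⟨0, by simp [allOnes, h]⟩
end

section
/- Conversely to the previous statement: if integers $b_1,\dots,b_n$ and $b'_1,\dots,b'_n$ each sum to $1$, and there exist integers $c_1,\dots,c_n$ with $\sum_{i=1}^n c_i=0$ and $c_i-c_{i-1}=b_i-b'_i$ for all $i$ (with $c_0=c_n$), then $\sum_{i=1}^{n-1}(n-i)b_i\equiv \sum_{i=1}^{n-1}(n-i)b'_i\pmod n$. -/
/-!
Since `b i - b' i = c i - c (i - 1)`, summation by parts turns the difference of the weighted sums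
into `∑_{i=0}^{n-1} c i - n * c 0`, and the first term vanishes because `∑_{i=1}^{n} c i = 0` and
`c 0 = c n`. The difference is therefore `-n * c 0`.
-/

open Finset

theorem sum_Icc_sub_mul_sub_eq (N : ℤ) (c : ℕ → ℤ) (M : ℕ) :
    ∑ i ∈ Icc 1 M, (N - i) * (c i - c (i - 1)) = (N - M) * c M + ∑ i ∈ range M, c i - N * c 0 := by
  induction M with
  | zero => simp
  | succ k ih =>
    rw [sum_Icc_succ_top (by omega), ih, sum_range_succ, Nat.add_sub_cancel]
    push_cast
    ring

theorem sum_Icc_one_add_eq_sum_range_add (c : ℕ → ℤ) (M : ℕ) :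
    ∑ i ∈ Icc 1 M, c i + c 0 = ∑ i ∈ range M, c i + c M := by
  induction M with
  | zero => simp
  | succ k ih =>
    rw [sum_Icc_succ_top (by omega), sum_range_succ]
    linarith

theorem congruent_weighted_sums_of_exists_c_general (n : ℕ) (b b' : ℕ → ℤ)
    (c : ℕ → ℤ) (hc0 : ∑ i ∈ Finset.Icc 1 n, c i = 0) (hcn : c 0 = c n)
    (hc : ∀ i, 1 ≤ i → i ≤ n → c i - c (i - 1) = b i - b' i) :
    (n : ℤ) ∣ (∑ i ∈ Finset.Icc 1 (n - 1), ((n : ℤ) - i) * b i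
      - ∑ i ∈ Finset.Icc 1 (n - 1), ((n : ℤ) - i) * b' i) := by
  rcases n with _ | m
  · simp
  have hdiff : ∑ i ∈ Icc 1 m, ((m + 1 : ℕ) - (i : ℤ)) * b i
      - ∑ i ∈ Icc 1 m, ((m + 1 : ℕ) - (i : ℤ)) * b' i
      = ∑ i ∈ Icc 1 m, ((m + 1 : ℕ) - (i : ℤ)) * (c i - c (i - 1)) := by
    rw [← sum_sub_distrib]
    refine sum_congr rfl fun i hi => ?_
    rw [mem_Icc] at hi
    rw [← mul_sub, hc i hi.1 (by omega)]
  refine ⟨-c 0, ?_⟩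
  have hshift := sum_Icc_one_add_eq_sum_range_add c (m + 1)
  rw [hc0, sum_range_succ, ← hcn] at hshift
  rw [Nat.add_sub_cancel, hdiff, sum_Icc_sub_mul_sub_eq]
  push_cast
  linear_combination -hshift

theorem congruent_weighted_sums_of_exists_c (n : ℕ) (hn : 2 ≤ n) (b b' : ℕ → ℤ)
    (hb : ∑ i ∈ Finset.Icc 1 n, b i = 1) (hb' : ∑ i ∈ Finset.Icc 1 n, b' i = 1)
    (c : ℕ → ℤ) (hc0 : ∑ i ∈ Finset.Icc 1 n, c i = 0) (hcn : c 0 = c n)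
    (hc : ∀ i, 1 ≤ i → i ≤ n → c i - c (i - 1) = b i - b' i) :
    (n : ℤ) ∣ (∑ i ∈ Finset.Icc 1 (n - 1), ((n : ℤ) - i) * b i
      - ∑ i ∈ Finset.Icc 1 (n - 1), ((n : ℤ) - i) * b' i) :=
  congruent_weighted_sums_of_exists_c_general n b b' c hc0 hcn hc
end

section
/- The number of binary necklaces of length $n$ with an odd number of zeros, i.e., the number of equivalence classes under cyclic rotation of sequences in $\{0,1\}^n$ with an odd number of $0$'s, equals $\frac{1}{2n}\sum_{d\mid n,\ d\text{ odd}}\varphi(d)2^{n/d}$, where $\varphi$ is Euler's totient function. -/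
/-- Two binary sequences of length `n` (indexed by `ZMod n`) are related iff one is a
cyclic rotation of the other. -/
def rotSetoid (n : ℕ) : Setoid (ZMod n → Bool) where
  r s t := ∃ k : ZMod n, ∀ i, t i = s (i + k)
  iseqv := by
    constructor
    · intro s; exact ⟨0, fun i => by rw [add_zero]⟩
    · rintro s t ⟨k, h⟩
      exact ⟨-k, fun i => by rw [h (i + -k)]; congr 1; ring⟩
    · rintro s t u ⟨k, h⟩ ⟨k', h'⟩
      exact ⟨k + k', fun i => by rw [h' i, h (i + k')]; congr 1; ring⟩

/-- The setoid of cyclic rotation restricted to binary sequences of length `n` with an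
odd number of zeros. -/
def oddZeroNecklaceSetoid (n : ℕ) [NeZero n] :
    Setoid {s : ZMod n → Bool // Odd (Finset.univ.filter (fun i => s i = false)).card} :=
  Setoid.comap Subtype.val (rotSetoid n)

/-!
Burnside's lemma for the rotation action of `ZMod n`. A word fixed by the rotation `k` is a
`k`-periodic word, i.e. a word on the `n / d` cosets of `⟨k⟩`, where `d` is the order of `k`;
its number of zeros is `d` times that of the coset word. So it is odd iff `d` is odd and the coset
word has an odd number of zeros, which holds for exactly half of the `2 ^ (n / d)` coset words
(flipping one letter swaps the parity). There are `φ d` rotations of order `d`.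
-/

open Finset Function

abbrev OddZeroWord (γ : Type*) [Fintype γ] := {s : γ → Bool // Odd #{i | s i = false}}

section OddZeros

variable {γ : Type*} [Fintype γ]

lemma odd_card_zeros_update_not_iff [DecidableEq γ] (f : γ → Bool) (a : γ) :
    Odd #{i | update f a (!f a) i = false} ↔ ¬Odd #{i | f i = false} := by
  have hsum : #{i | update f a (!f a) i = false} + #{i | f i = false}
      = 2 * #{i ∈ univ.erase a | f i = false} + 1 := by
    simp only [card_filter, ← add_sum_erase _ _ (mem_univ a), update_self]
    rw [sum_congr rfl fun i hi => by rw [update_of_ne (ne_of_mem_erase hi)]]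
    cases f a <;> simp <;> ring
  rw [Nat.not_odd_iff_even, ← Nat.odd_add, hsum]
  exact odd_two_mul_add_one _

lemma two_mul_card_odd_zeros [Nonempty γ] :
    2 * Nat.card (OddZeroWord γ) = 2 ^ Fintype.card γ := by
  classical
  obtain ⟨a⟩ := ‹Nonempty γ›
  have flip : Involutive fun f : γ → Bool => update f a (!f a) := fun f => by simp
  have odd_equiv_even : OddZeroWord γ ≃ {f : γ → Bool // ¬Odd #{i | f i = false}} :=
    flip.toPerm.subtypeEquiv fun f => by
      rw [Involutive.coe_toPerm, odd_card_zeros_update_not_iff, not_not]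
  rw [two_mul]
  nth_rw 2 [Nat.card_congr odd_equiv_even]
  rw [← Nat.card_sum, Nat.card_congr (Equiv.sumCompl _)]
  simp

end OddZeros

section Periodic

variable {G α : Type*} [AddGroup G]

def Function.periodicEquivQuotient (c : G) :
    {f : G → α // Periodic f c} ≃ (G ⧸ AddSubgroup.zmultiples c → α) where
  toFun f := f.2.lift
  invFun g := ⟨g ∘ (↑), fun x => congrArg g <| QuotientAddGroup.eq.mpr <| by
    simp [add_assoc]⟩
  left_inv _ := rfl
  right_inv g := funext fun q => QuotientAddGroup.induction_on q fun _ => rfl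

lemma card_filter_quotientMk [Fintype G] (H : AddSubgroup G) [Fintype (G ⧸ H)]
    (p : G ⧸ H → Prop) [DecidablePred p] :
    #{i : G | p i} = Nat.card H * #{q | p q} := by
  simp only [← Fintype.card_subtype, ← Nat.card_eq_fintype_card, ← Nat.card_prod]
  exact Nat.card_congr (QuotientAddGroup.preimageMkEquivAddSubgroupProdSet H {q | p q})

lemma card_quotient_zmultiples [Finite G] (c : G) :
    Nat.card (G ⧸ AddSubgroup.zmultiples c) = Nat.card G / addOrderOf c := by
  rw [← AddSubgroup.index_eq_card, ← AddSubgroup.card_mul_index (AddSubgroup.zmultiples c),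
    Nat.card_zmultiples, Nat.mul_div_cancel_left _ (addOrderOf_pos c)]

end Periodic

section Rotation

variable {G : Type*} [AddGroup G] [Fintype G]

lemma card_zeros_comp_add_right (s : G → Bool) (k : G) :
    #{i | s (i + k) = false} = #{i | s i = false} := by
  simp only [← Fintype.card_subtype]
  exact Fintype.card_congr ((Equiv.addRight k).subtypeEquiv fun _ => Iff.rfl)

instance : AddAction G (OddZeroWord G) where
  vadd k s := ⟨fun i => s.1 (i + k), (card_zeros_comp_add_right s.1 k).symm ▸ s.2⟩
  zero_vadd s := Subtype.ext <| funext fun i => congrArg s.1 (add_zero i)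
  add_vadd k k' s := Subtype.ext <| funext fun i => congrArg s.1 (add_assoc i k k').symm

@[simp]
lemma vadd_val_apply (k : G) (s : OddZeroWord G) (i : G) :
    (k +ᵥ s).1 i = s.1 (i + k) :=
  rfl

lemma mem_fixedBy_iff_periodic (s : OddZeroWord G) (k : G) :
    s ∈ AddAction.fixedBy _ k ↔ Periodic s.1 k := by
  rw [AddAction.mem_fixedBy, Subtype.ext_iff, funext_iff]
  rfl

lemma two_mul_card_fixedBy (k : G) :
    2 * Nat.card (AddAction.fixedBy (OddZeroWord G) k)
      = if Odd (addOrderOf k) then 2 ^ (Nat.card G / addOrderOf k) else 0 := by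
  classical
  set Q := G ⧸ AddSubgroup.zmultiples k
  have e : AddAction.fixedBy (OddZeroWord G) k
      ≃ {g : Q → Bool // Odd (addOrderOf k) ∧ Odd #{q | g q = false}} :=
    calc _ ≃ {s : G → Bool // Odd #{i | s i = false} ∧ Periodic s k} :=
          (Equiv.subtypeEquivRight fun s => mem_fixedBy_iff_periodic s k).trans
            (Equiv.subtypeSubtypeEquivSubtypeInter (fun s : G → Bool => Odd #{i | s i = false})
              (Periodic · k))
      _ ≃ {s : {s : G → Bool // Periodic s k} // Odd #{i | s.1 i = false}} :=
          (Equiv.subtypeEquivRight fun _ => and_comm).trans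
            (Equiv.subtypeSubtypeEquivSubtypeInter (Periodic · k) _).symm
      _ ≃ _ := (periodicEquivQuotient k).subtypeEquiv fun s => by
          rw [← Nat.odd_mul, ← Nat.card_zmultiples, ← card_filter_quotientMk]
          rfl
  rw [Nat.card_congr e]
  split_ifs with h
  · simp only [h, true_and]
    rw [two_mul_card_odd_zeros, Fintype.card_eq_nat_card, card_quotient_zmultiples]
  · simp [h]

end Rotation

lemma IsAddCyclic.sum_comp_addOrderOf {G M : Type*} [AddGroup G] [Fintype G] [IsAddCyclic G]
    [AddCommMonoid M] (f : ℕ → M) :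
    ∑ k : G, f (addOrderOf k) = ∑ d ∈ (Fintype.card G).divisors, d.totient • f d := by
  classical
  have order_mem_divisors (k : G) (_ : k ∈ univ) : addOrderOf k ∈ (Fintype.card G).divisors :=
    Nat.mem_divisors.mpr ⟨addOrderOf_dvd_card, Fintype.card_ne_zero⟩
  rw [← sum_fiberwise_of_maps_to order_mem_divisors]
  refine sum_congr rfl fun d hd => ?_
  rw [sum_congr rfl fun k hk => by rw [(mem_filter.mp hk).2], sum_const,
    IsAddCyclic.card_addOrderOf_eq_totient (Nat.dvd_of_mem_divisors hd)]

lemma oddZeroNecklaceSetoid_eq_orbitRel (n : ℕ) [NeZero n] :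
    oddZeroNecklaceSetoid n = AddAction.orbitRel (ZMod n) _ := by
  ext s t
  exact ⟨fun ⟨k, h⟩ => ⟨-k, Subtype.ext <| funext fun i => by simp [h]⟩,
    fun ⟨k, h⟩ => ⟨-k, fun i => by simp [← h]⟩⟩

theorem card_oddZeroNecklaces (n : ℕ) [NeZero n] :
    Nat.card (Quotient (oddZeroNecklaceSetoid n)) * (2 * n)
      = ∑ d ∈ n.divisors.filter (fun d => Odd d), d.totient * 2 ^ (n / d) := by
  classical
  have burnside := AddAction.sum_card_fixedBy_eq_card_orbits_mul_card_addGroup (ZMod n)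
    (OddZeroWord (ZMod n))
  rw [oddZeroNecklaceSetoid_eq_orbitRel, sum_filter]
  calc _ = ∑ k : ZMod n, 2 * Nat.card (AddAction.fixedBy (OddZeroWord (ZMod n)) k) := by
        simp only [Nat.card_eq_fintype_card, ← mul_sum, burnside, ZMod.card]; ring
    _ = ∑ k : ZMod n, if Odd (addOrderOf k) then 2 ^ (n / addOrderOf k) else 0 := by
        simp only [two_mul_card_fixedBy, Nat.card_zmod]
    _ = _ := by
        rw [IsAddCyclic.sum_comp_addOrderOf (fun d => if Odd d then 2 ^ (n / d) else 0),
          ZMod.card]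
        simp only [smul_eq_mul, mul_ite, mul_zero]
end

section
/- Let $A$ be the $n\times n$ cyclic-form matrix with diagonal $1$'s and entries $a_1,\dots,a_n$ (corner $A_{1,n}=a_1$, subdiagonal $A_{i,i-1}=a_i$), let $\tilde A$ be its adjugate matrix (so $A\tilde A=(\det A)E_n$), and suppose $\det A = 0$. If the system $\tilde A\mathbf{x}=\mathbf{1}$ has an integer solution $\mathbf{b}$, then $a_i=-1$ for all $i=1,\dots,n$. -/
open Matrix

theorem Matrix.mulVec_adjugate_mulVec_of_det_eq_zero {ι R : Type*} [Fintype ι] [DecidableEq ι]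
    [CommRing R] {A : Matrix ι ι R} (hA : A.det = 0) (b : ι → R) :
    A *ᵥ (A.adjugate *ᵥ b) = 0 := by
  rw [mulVec_mulVec, mul_adjugate, hA, zero_smul, zero_mulVec]

theorem val_finRotate {n : ℕ} (j : Fin n) : (finRotate n j : ℕ) = ((j : ℕ) + 1) % n := by
  have := j.neZero
  rw [finRotate_apply, Fin.val_add, Fin.val_one', Nat.add_mod_mod]

theorem finRotate_ne_self {n : ℕ} (hn : 2 ≤ n) (i : Fin n) : finRotate n i ≠ i :=
  Equiv.Perm.mem_support.mp (support_finRotate_of_le hn ▸ Finset.mem_univ i)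

section
variable {n : ℕ} {R : Type*} [CommRing R]

theorem cycMat_apply_self (a : Fin n → R) (i : Fin n) : cycMat n a i i = 1 := by
  simp [cycMat]

theorem cycMat_apply_of_ne (a : Fin n → R) {i j : Fin n} (hij : i ≠ j) :
    cycMat n a i j = if finRotate n j = i then a i else 0 := by
  rw [cycMat, of_apply, if_neg hij]
  simp only [Fin.ext_iff, val_finRotate, eq_comm]

theorem sum_cycMat_row (hn : 2 ≤ n) (a : Fin n → R) (i : Fin n) :
    ∑ j, cycMat n a i j = 1 + a i := by
  have hprev : i ≠ (finRotate n).symm i :=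
    fun h => finRotate_ne_self hn i (Equiv.symm_apply_eq _ |>.mp h.symm).symm
  rw [Finset.sum_eq_add i ((finRotate n).symm i) hprev, cycMat_apply_self,
    cycMat_apply_of_ne a hprev, if_pos (Equiv.apply_symm_apply _ _)]
  · rintro j - ⟨hji, hj⟩
    rw [cycMat_apply_of_ne a (Ne.symm hji), if_neg (fun h => hj (Equiv.eq_symm_apply _ |>.mpr h))]
  all_goals exact fun h => absurd (Finset.mem_univ _) h

theorem cycMat_mulVec_one (hn : 2 ≤ n) (a : Fin n → R) : cycMat n a *ᵥ 1 = 1 + a := by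
  ext i
  simp only [mulVec, dotProduct, Pi.one_apply, mul_one, sum_cycMat_row hn, Pi.add_apply]

end

theorem all_entries_neg_one_of_det_zero (n : ℕ) (hn : 2 ≤ n) (a : Fin n → ℤ)
    (hdet : (cycMat n a).det = 0) (b : Fin n → ℤ)
    (hb : (cycMat n a).adjugate.mulVec b = fun _ => 1) :
    ∀ i, a i = -1 := by
  have hker := mulVec_adjugate_mulVec_of_det_eq_zero hdet b
  rw [hb, ← Pi.one_def, cycMat_mulVec_one hn] at hker
  exact fun i => eq_neg_of_add_eq_zero_right (congrFun hker i)
end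

section
/- Let $n\ge 4$ and $p$ an odd prime. Suppose integers $r_1,\dots,r_n$ satisfy $2r_1(r_n+r_1)\equiv 0\pmod p$, $r_i(2r_{i-1}+r_i)\equiv 0\pmod p$ for $2\le i\le n$, $2r_ir_j\equiv 0\pmod p$ for all $(i,j)$ with $i-j\ge 2$ and $(i,j)\ne(n,1)$, and $\gcd(r_1,\dots,r_n)=1$. Then a contradiction follows; i.e., no such integers exist. -/
/-!
Reduce modulo `p`, where `2` is invertible, so every congruence becomes a product of two residues
equal to zero. If `r (k - 1) ≡ 0` then `r k ^ 2 ≡ 0`, so vanishing propagates upwards. For `k ≥ 3`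
the pair `(k, k - 2)` is never `(n, 1)` since `n ≥ 4`; so either `r k ≡ 0`, or `r (k - 2) ≡ 0`
and two propagation steps give `r k ≡ 0` anyway. Now `r n ≡ 0` turns the first congruence into
`r 1 ^ 2 ≡ 0`, and one more step gives `r 2 ≡ 0`. Thus `p` divides every `r k`, hence their gcd.
-/

structure Type3Congruences {R : Type*} [CommRing R] (n : ℕ) (s : ℕ → R) : Prop where
  first : 2 * s 1 * (s n + s 1) = 0
  consecutive : ∀ i, 2 ≤ i → i ≤ n → s i * (2 * s (i - 1) + s i) = 0
  distant : ∀ i j, i ≤ n → 1 ≤ j → j + 2 ≤ i → (i, j) ≠ (n, 1) → 2 * s i * s j = 0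

namespace Type3Congruences

variable {R : Type*} [CommRing R] [IsDomain R] {n : ℕ} {s : ℕ → R}

theorem eq_zero_of_pred_eq_zero (h : Type3Congruences n s) {i : ℕ} (hi : 2 ≤ i) (hin : i ≤ n)
    (hpred : s (i - 1) = 0) : s i = 0 := by
  simpa [hpred] using h.consecutive i hi hin

theorem eq_zero_of_three_le (h : Type3Congruences n s) (hn : 4 ≤ n) (h2 : (2 : R) ≠ 0)
    {k : ℕ} (hk : 3 ≤ k) (hkn : k ≤ n) : s k = 0 := by
  have hprod : s k * s (k - 2) = 0 := by
    simpa [mul_assoc, h2] using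
      h.distant k (k - 2) hkn (by omega) (by omega) (by simp only [Ne, Prod.mk.injEq]; omega)
  rcases mul_eq_zero.mp hprod with hsk | hsk2
  · exact hsk
  · have hsk1 : s (k - 1) = 0 :=
      h.eq_zero_of_pred_eq_zero (by omega) (by omega) (by rwa [show k - 1 - 1 = k - 2 by omega])
    exact h.eq_zero_of_pred_eq_zero (by omega) hkn hsk1

theorem eq_zero (h : Type3Congruences n s) (hn : 4 ≤ n) (h2 : (2 : R) ≠ 0)
    {k : ℕ} (hk : 1 ≤ k) (hkn : k ≤ n) : s k = 0 := by
  have hs1 : s 1 = 0 := by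
    simpa [h.eq_zero_of_three_le hn h2 (by omega) le_rfl, h2] using h.first
  obtain rfl | rfl | hk3 : k = 1 ∨ k = 2 ∨ 3 ≤ k := by omega
  · exact hs1
  · exact h.eq_zero_of_pred_eq_zero le_rfl (by omega) hs1
  · exact h.eq_zero_of_three_le hn h2 hk3 hkn

end Type3Congruences

theorem type3_congruence_system_no_solution (n : ℕ) (hn : 4 ≤ n) (p : ℕ)
    (hp : p.Prime) (hpodd : Odd p) (r : ℕ → ℤ)
    (hgcd : Finset.gcd (Finset.Icc 1 n) r = 1)
    (h1 : (p : ℤ) ∣ 2 * r 1 * (r n + r 1))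
    (h2 : ∀ i, 2 ≤ i → i ≤ n → (p : ℤ) ∣ r i * (2 * r (i - 1) + r i))
    (h3 : ∀ i j, i ≤ n → 1 ≤ j → j + 2 ≤ i → (i, j) ≠ (n, 1) → (p : ℤ) ∣ 2 * r i * r j) :
    False := by
  have : Fact p.Prime := ⟨hp⟩
  have htwo : (2 : ZMod p) ≠ 0 := Ring.two_ne_zero <| by
    rw [ZMod.ringChar_zmod_n]
    rintro rfl
    exact absurd hpodd (by decide)
  have hmod : Type3Congruences n (fun i ↦ (r i : ZMod p)) := by
    simp_rw [← ZMod.intCast_zmod_eq_zero_iff_dvd] at h1 h2 h3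
    push_cast at h1 h2 h3
    exact ⟨h1, h2, h3⟩
  have hdvd : (p : ℤ) ∣ 1 := hgcd ▸ Finset.dvd_gcd fun k hk ↦ by
    rw [Finset.mem_Icc] at hk
    exact (ZMod.intCast_zmod_eq_zero_iff_dvd _ p).mp (hmod.eq_zero hn htwo hk.1 hk.2)
  exact hp.not_dvd_one (by exact_mod_cast hdvd)
end
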